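/- arXiv:2111.14061 — 3 statements merged into one kernel-verified Lean document; each statement's English description precedes it below -/
import Mathlib

section
/- Let n ≥ 1, let l, r : {1,…,n} → ℝ satisfy l_i < r_i for all i, and let μ be a Borel probability measure on ℝ with CDF F = F_μ. Then μ_n({u ∈ (0,1)^n : F(l_i) < u_i ≤ F(r_i) for all i} ∩ C) = ∏_{i=1}^n (F(r_i) − F(l_i)). In particular the fiducial plausibility of F, computed under the uniform distribution on the constraint set C, is proportional to the likelihood ∏_{i=1}^n (F(r_i) − F(l_i)). -/
/-! The ordering constraint `C` costs nothing: if `r i ≤ l j` then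
`u i ≤ F (r i) ≤ F (l j) < u j` by monotonicity of `F`, so on the box
`∏ i, (F (l i), F (r i)]` the constraint holds automatically. The set is therefore a product
of intervals and its uniform measure is the product of their lengths. -/

open MeasureTheory ProbabilityTheory

/-- The uniform probability measure on the interval `(0,1) ⊂ ℝ`. -/
noncomputable def unifMeas : Measure ℝ := MeasureTheory.volume.restrict (Set.Ioo (0 : ℝ) 1)

/-- The `n`-fold product of the uniform measure on `(0,1)`. -/
noncomputable def unifPi (n : ℕ) : Measure (Fin n → ℝ) := Measure.pi fun _ => unifMeas

instance : IsProbabilityMeasure unifMeas :=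
  ⟨by simp [unifMeas]⟩

lemma unifMeas_Ioo_inter_Ioc {a b : ℝ} (ha : 0 ≤ a) (hb : b ≤ 1) :
    unifMeas (Set.Ioo 0 1 ∩ Set.Ioc a b) = ENNReal.ofReal (b - a) := by
  have hae : (Set.Ioo 0 1 ∩ Set.Ioc a b : Set ℝ) =ᵐ[volume]
      (Set.Ioc 0 1 ∩ Set.Ioc a b : Set ℝ) :=
    Ioo_ae_eq_Ioc.inter (ae_eq_refl _)
  rw [unifMeas, Measure.restrict_apply (measurableSet_Ioo.inter measurableSet_Ioc),
    Set.inter_right_comm, Set.inter_self, measure_congr hae,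
    Set.inter_eq_right.mpr (Set.Ioc_subset_Ioc ha hb), Real.volume_Ioc]

lemma setOf_mem_Ioc_inter_setOf_ordered_eq_pi {ι α β : Type*} [Preorder α] [Preorder β]
    {F : α → β} (hF : Monotone F) (l r : ι → α) (s : Set β) :
    {u : ι → β | (∀ i, u i ∈ s) ∧ ∀ i, F (l i) < u i ∧ u i ≤ F (r i)} ∩
        {u : ι → β | (∀ i, u i ∈ s) ∧ ∀ i j, r i ≤ l j → u i < u j} =
      Set.univ.pi fun i => s ∩ Set.Ioc (F (l i)) (F (r i)) := by
  ext u
  simp only [Set.mem_inter_iff, Set.mem_ofPred_eq, Set.mem_univ_pi, Set.mem_Ioc]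
  constructor
  · rintro ⟨⟨hs, hbox⟩, -⟩ i
    exact ⟨hs i, hbox i⟩
  · intro h
    refine ⟨⟨fun i => (h i).1, fun i => (h i).2⟩, fun i => (h i).1, fun i j hij => ?_⟩
    calc u i ≤ F (r i) := (h i).2.2
      _ ≤ F (l j) := hF hij
      _ < u j := (h j).2.1

theorem stmt9_general (n : ℕ) (l r : Fin n → ℝ)
    (μ : Measure ℝ) [IsProbabilityMeasure μ] :
    unifPi n
        ({u : Fin n → ℝ | (∀ i, u i ∈ Set.Ioo (0 : ℝ) 1) ∧
            ∀ i, cdf μ (l i) < u i ∧ u i ≤ cdf μ (r i)} ∩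
          {u : Fin n → ℝ | (∀ i, u i ∈ Set.Ioo (0 : ℝ) 1) ∧
            ∀ i j, r i ≤ l j → u i < u j}) =
      ∏ i : Fin n, ENNReal.ofReal (cdf μ (r i) - cdf μ (l i)) := by
  rw [setOf_mem_Ioc_inter_setOf_ordered_eq_pi (cdf μ).mono, unifPi, Measure.pi_pi]
  exact Finset.prod_congr rfl fun i _ =>
    unifMeas_Ioo_inter_Ioc (cdf_nonneg μ (l i)) (cdf_le_one μ (r i))

/-- For `l i < r i` and a Borel probability measure `μ` with CDF `F`,
`μ_n({u ∈ (0,1)^n : F(l i) < u i ≤ F(r i) ∀ i} ∩ C) = ∏ i, (F(r i) − F(l i))`;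
hence the fiducial plausibility of `F` under the uniform distribution on `C` is
proportional to the likelihood. -/
theorem stmt9 (n : ℕ) (hn : 1 ≤ n) (l r : Fin n → ℝ) (hlr : ∀ i, l i < r i)
    (μ : Measure ℝ) [IsProbabilityMeasure μ] :
    unifPi n
        ({u : Fin n → ℝ | (∀ i, u i ∈ Set.Ioo (0 : ℝ) 1) ∧
            ∀ i, cdf μ (l i) < u i ∧ u i ≤ cdf μ (r i)} ∩
          {u : Fin n → ℝ | (∀ i, u i ∈ Set.Ioo (0 : ℝ) 1) ∧
            ∀ i j, r i ≤ l j → u i < u j}) =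
      ∏ i : Fin n, ENNReal.ofReal (cdf μ (r i) - cdf μ (l i)) :=
  stmt9_general n l r μ
end

section
/- Let n ≥ 1, let l, r : {1,…,n} → ℝ satisfy l_i < r_i for all i, and assume μ_n(C) > 0. For a Borel probability measure ν on ℝ write B(ν) = {u ∈ (0,1)^n : F_ν(l_i) < u_i ≤ F_ν(r_i) for all i}. If a Borel probability measure ν₀ on ℝ maximizes the conditional probability μ_n(B(ν) | C) over all Borel probability measures ν on ℝ, then ν₀ maximizes the nonparametric likelihood ∏_{i=1}^n (F_ν(r_i) − F_ν(l_i)) over all Borel probability measures ν on ℝ; i.e., any maximizer of the fiducial plausibility is a nonparametric maximum likelihood estimator. -/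
open MeasureTheory ProbabilityTheory

/-- The set `B(ν) = {u ∈ (0,1)^n : F_ν(l i) < u i ≤ F_ν(r i) ∀ i}`. -/
def fidSet (n : ℕ) (l r : Fin n → ℝ) (ν : Measure ℝ) : Set (Fin n → ℝ) :=
  {u : Fin n → ℝ | (∀ i, u i ∈ Set.Ioo (0 : ℝ) 1) ∧
    ∀ i, cdf ν (l i) < u i ∧ u i ≤ cdf ν (r i)}

/-- The constraint set `C = {u ∈ (0,1)^n : ∀ i j, r i ≤ l j → u i < u j}`. -/
def constraintSet (n : ℕ) (l r : Fin n → ℝ) : Set (Fin n → ℝ) :=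
  {u : Fin n → ℝ | (∀ i, u i ∈ Set.Ioo (0 : ℝ) 1) ∧ ∀ i j, r i ≤ l j → u i < u j}

/-! Every `u ∈ B(ν)` satisfies the constraints defining `C`: if `r i ≤ l j` then
`u i ≤ F(r i) ≤ F(l j) < u j`. Hence `μ_n(B(ν) | C) = μ_n(B(ν)) / μ_n(C)`, and since `B(ν)` is,
up to a null set, the box `∏ i, (F(l i), F(r i)]`, `μ_n(B(ν))` is exactly the likelihood of `ν`.
So the conditional probability is a fixed positive multiple of the likelihood. -/

instance inst_s10 : IsProbabilityMeasure unifMeas :=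
  ⟨by simp [unifMeas, Real.volume_Ioo]⟩

instance (n : ℕ) : IsProbabilityMeasure (unifPi n) := by
  unfold unifPi; infer_instance

lemma unifMeas_Ioc {a b : ℝ} (ha : 0 ≤ a) (hb : b ≤ 1) :
    unifMeas (Set.Ioc a b) = ENNReal.ofReal (b - a) := by
  rw [unifMeas, Measure.restrict_congr_set Ioo_ae_eq_Ioc, Measure.restrict_apply measurableSet_Ioc,
    Set.inter_eq_left.mpr (Set.Ioc_subset_Ioc ha hb), Real.volume_Ioc]

lemma unifMeas_Ioo_inter (s : Set ℝ) : unifMeas (Set.Ioo 0 1 ∩ s) = unifMeas s := by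
  rw [unifMeas, Measure.restrict_apply' measurableSet_Ioo, Measure.restrict_apply' measurableSet_Ioo,
    Set.inter_right_comm, Set.inter_self, Set.inter_comm s]

noncomputable def likelihood {n : ℕ} (l r : Fin n → ℝ) (ν : Measure ℝ) : ℝ :=
  ∏ i, (cdf ν (r i) - cdf ν (l i))

section IntervalData

variable {n : ℕ} (l r : Fin n → ℝ)

lemma likelihood_nonneg (hlr : ∀ i, l i ≤ r i) (ν : Measure ℝ) : 0 ≤ likelihood l r ν :=
  Finset.prod_nonneg fun i _ => sub_nonneg.mpr (monotone_cdf ν (hlr i))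

lemma fidSet_subset_constraintSet (ν : Measure ℝ) : fidSet n l r ν ⊆ constraintSet n l r := by
  rintro u ⟨hu01, hu⟩
  refine ⟨hu01, fun i j hij => ?_⟩
  calc u i ≤ cdf ν (r i) := (hu i).2
    _ ≤ cdf ν (l j) := monotone_cdf ν hij
    _ < u j := (hu j).1

lemma fidSet_eq_pi (ν : Measure ℝ) :
    fidSet n l r ν = Set.univ.pi fun i => Set.Ioo 0 1 ∩ Set.Ioc (cdf ν (l i)) (cdf ν (r i)) := by
  ext u
  simp only [fidSet, Set.mem_ofPred_eq, Set.mem_univ_pi, Set.mem_inter_iff, Set.mem_Ioc]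
  exact ⟨fun ⟨hu01, hu⟩ i => ⟨hu01 i, hu i⟩, fun hu => ⟨fun i => (hu i).1, fun i => (hu i).2⟩⟩

lemma unifPi_fidSet (hlr : ∀ i, l i ≤ r i) (ν : Measure ℝ) :
    unifPi n (fidSet n l r ν) = ENNReal.ofReal (likelihood l r ν) := by
  rw [fidSet_eq_pi, unifPi, Measure.pi_pi, likelihood,
    ENNReal.ofReal_prod_of_nonneg fun i _ => sub_nonneg.mpr (monotone_cdf ν (hlr i))]
  refine Finset.prod_congr rfl fun i _ => ?_
  rw [unifMeas_Ioo_inter, unifMeas_Ioc (cdf_nonneg ν (l i)) (cdf_le_one ν (r i))]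

lemma unifPi_fidSet_inter_constraintSet (hlr : ∀ i, l i ≤ r i) (ν : Measure ℝ) :
    unifPi n (fidSet n l r ν ∩ constraintSet n l r) = ENNReal.ofReal (likelihood l r ν) := by
  rw [Set.inter_eq_left.mpr (fidSet_subset_constraintSet l r ν), unifPi_fidSet l r hlr]

end IntervalData

theorem stmt10_general (n : ℕ) (l r : Fin n → ℝ) (hlr : ∀ i, l i < r i)
    (hC : 0 < unifPi n (constraintSet n l r))
    (ν₀ : Measure ℝ)
    (hmax : ∀ ν : Measure ℝ, IsProbabilityMeasure ν →
      unifPi n (fidSet n l r ν ∩ constraintSet n l r) / unifPi n (constraintSet n l r) ≤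
        unifPi n (fidSet n l r ν₀ ∩ constraintSet n l r) / unifPi n (constraintSet n l r)) :
    ∀ ν : Measure ℝ, IsProbabilityMeasure ν →
      ∏ i : Fin n, (cdf ν (r i) - cdf ν (l i)) ≤
        ∏ i : Fin n, (cdf ν₀ (r i) - cdf ν₀ (l i)) := by
  intro ν _
  have hlr' : ∀ i, l i ≤ r i := fun i => (hlr i).le
  have hL : ENNReal.ofReal (likelihood l r ν) ≤ ENNReal.ofReal (likelihood l r ν₀) := by
    refine le_of_not_gt fun hlt => (hmax ν inferInstance).not_gt ?_
    simp only [unifPi_fidSet_inter_constraintSet l r hlr']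
    exact ENNReal.div_lt_div_right hC.ne' (measure_ne_top _ _) hlt
  exact (ENNReal.ofReal_le_ofReal_iff (likelihood_nonneg l r hlr' ν₀)).mp hL

/-- Assume `μ_n(C) > 0`. If a Borel probability measure `ν₀` maximizes the
conditional fiducial plausibility `μ_n(B(ν) ∩ C) / μ_n(C)` over all Borel probability
measures `ν`, then `ν₀` maximizes the nonparametric likelihood
`∏ i, (F_ν(r i) − F_ν(l i))`; i.e. any maximizer of the fiducial plausibility is an
NPMLE. -/
theorem stmt10 (n : ℕ) (hn : 1 ≤ n) (l r : Fin n → ℝ) (hlr : ∀ i, l i < r i)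
    (hC : 0 < unifPi n (constraintSet n l r))
    (ν₀ : Measure ℝ) [IsProbabilityMeasure ν₀]
    (hmax : ∀ ν : Measure ℝ, IsProbabilityMeasure ν →
      unifPi n (fidSet n l r ν ∩ constraintSet n l r) / unifPi n (constraintSet n l r) ≤
        unifPi n (fidSet n l r ν₀ ∩ constraintSet n l r) / unifPi n (constraintSet n l r)) :
    ∀ ν : Measure ℝ, IsProbabilityMeasure ν →
      ∏ i : Fin n, (cdf ν (r i) - cdf ν (l i)) ≤
        ∏ i : Fin n, (cdf ν₀ (r i) - cdf ν₀ (l i)) :=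
  stmt10_general n l r hlr hC ν₀ hmax
end

section
/- Let n ≥ 1 and 0 ≤ t ≤ n, and set s = t/(n(n+1)). Then μ_n({u ∈ (0,1)^n : |u_i − u_j| > s for all i ≠ j, and s < u_i < 1 − s for all i}) ≥ (1 − t/n)^n. Equivalently, for n i.i.d. Uniform(0,1) random variables, the probability that all n+1 consecutive spacings of the order statistics (including the boundary spacings to 0 and 1) exceed t/(n(n+1)) is at least (1 − t/n)^n. -/
open MeasureTheory Set Pointwise
open scoped ENNReal NNReal


open MeasureTheory

instance : SigmaFinite unifMeas := by unfold unifMeas; infer_instance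

lemma unifPi_eq (n : ℕ) :
    unifPi n = (volume : Measure (Fin n → ℝ)).restrict (Set.univ.pi fun _ : Fin n => Set.Ioo (0:ℝ) 1) := by
  rw [show unifPi n = Measure.pi (fun _ : Fin n => unifMeas) from rfl]
  
  refine (Measure.pi_eq (μ := fun _ : Fin n => unifMeas) fun s hs => ?_)
  rw [Measure.restrict_apply (MeasurableSet.univ_pi hs), ← Set.pi_inter_distrib, volume_pi_pi]
  exact Finset.prod_congr rfl fun i _ => (Measure.restrict_apply (hs i)).symm

lemma unifPi_comp_perm (n : ℕ) (σ : Equiv.Perm (Fin n)) {A : Set (Fin n → ℝ)}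
    (hA : MeasurableSet A) : unifPi n {u | u ∘ σ ∈ A} = unifPi n A := by
  have h := measurePreserving_piCongrLeft (fun _ : Fin n => unifMeas) (σ⁻¹ : Fin n ≃ Fin n)
  have hT : ∀ u : Fin n → ℝ, (MeasurableEquiv.piCongrLeft (fun _ : Fin n => ℝ) (σ⁻¹ : Fin n ≃ Fin n)) u = u ∘ σ := by
    intro u; funext j
    have := MeasurableEquiv.piCongrLeft_apply_apply (σ⁻¹ : Fin n ≃ Fin n)
      (β := fun _ => ℝ) u (σ j)
    simpa using this
  have h2 := h.measure_preimage hA.nullMeasurableSet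
  have heq : (MeasurableEquiv.piCongrLeft (fun _ : Fin n => ℝ) (σ⁻¹ : Fin n ≃ Fin n)) ⁻¹' A = {u | u ∘ σ ∈ A} := by
    ext u; simp [Set.mem_preimage, hT u]
  rw [heq] at h2
  exact h2

lemma strictMono_measurableSet (n : ℕ) : MeasurableSet {v : Fin n → ℝ | StrictMono v} := by
  have : {v : Fin n → ℝ | StrictMono v}
      = ⋂ (i : Fin n), ⋂ (j : Fin n), ⋂ (_ : i < j), {v : Fin n → ℝ | v i < v j} := by
    ext v
    simp only [Set.mem_setOf_eq, Set.mem_iInter]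
    exact ⟨fun h i j hij => h hij, fun h a b hab => h a b hab⟩
  rw [this]
  exact MeasurableSet.iInter fun i => MeasurableSet.iInter fun j => MeasurableSet.iInter fun _ =>
    measurableSet_lt (measurable_pi_apply i) (measurable_pi_apply j)

lemma unifPi_le_volume (n : ℕ) (A : Set (Fin n → ℝ)) : unifPi n A ≤ volume A := by
  rw [unifPi_eq]
  exact Measure.restrict_apply_le _ _

/-- covering bound: `1 ≤ n! * unifPi {StrictMono}` -/
lemma one_le_card_mul (n : ℕ) :
    1 ≤ (Fintype.card (Equiv.Perm (Fin n)) : ℝ≥0∞) * unifPi n {v : Fin n → ℝ | StrictMono v} := by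
  set MM : Set (Fin n → ℝ) := {v | StrictMono v} with hMM
  have huniv : unifPi n (Set.univ : Set (Fin n → ℝ)) = 1 := by
    rw [unifPi_eq, Measure.restrict_apply MeasurableSet.univ, Set.univ_inter, volume_pi_pi]
    simp [Real.volume_Ioo]
  have hN : unifPi n {u : Fin n → ℝ | ¬ Function.Injective u} = 0 := by
    have hsub : {u : Fin n → ℝ | ¬ Function.Injective u}
        ⊆ ⋃ p : Fin n × Fin n, {u : Fin n → ℝ | p.1 ≠ p.2 ∧ u p.1 = u p.2} := by
      intro u hu
      simp only [Set.mem_setOf_eq, Function.Injective] at hu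
      push_neg at hu
      obtain ⟨i, j, hij, hne⟩ := hu
      exact Set.mem_iUnion.2 ⟨(i, j), hne, hij⟩
    refine measure_mono_null hsub (measure_iUnion_null fun p => ?_)
    by_cases hp : p.1 = p.2
    · have : {u : Fin n → ℝ | p.1 ≠ p.2 ∧ u p.1 = u p.2} = ∅ := by
        ext u; simp [hp]
      simp [this]
    · refine measure_mono_null (t := {u : Fin n → ℝ | u p.1 = u p.2}) (fun u hu => hu.2) ?_
      refine nonpos_iff_eq_zero.1 ((unifPi_le_volume n _).trans_eq ?_)
      set φ : (Fin n → ℝ) →ₗ[ℝ] ℝ :=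
        (LinearMap.proj p.1 : (Fin n → ℝ) →ₗ[ℝ] ℝ) - LinearMap.proj p.2 with hφ
      have hker : {u : Fin n → ℝ | u p.1 = u p.2} = (LinearMap.ker φ : Set (Fin n → ℝ)) := by
        ext u
        simp [hφ, LinearMap.mem_ker, LinearMap.sub_apply, sub_eq_zero]
      rw [hker]
      refine Measure.addHaar_submodule _ _ ?_
      intro htop
      have h1 : φ (Pi.single p.1 1) = 0 := by
        rw [← LinearMap.mem_ker, htop]; trivial
      rw [hφ] at h1
      simp only [LinearMap.sub_apply, LinearMap.proj_apply] at h1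
      rw [Pi.single_eq_same, Pi.single_eq_of_ne (Ne.symm hp)] at h1
      norm_num at h1
  have hcover : (Set.univ : Set (Fin n → ℝ))
      ⊆ {u : Fin n → ℝ | ¬ Function.Injective u} ∪ ⋃ σ : Equiv.Perm (Fin n), {u : Fin n → ℝ | u ∘ σ ∈ MM} := by
    intro u _
    by_cases hu : Function.Injective u
    · right
      refine Set.mem_iUnion.2 ⟨Tuple.sort u, ?_⟩
      exact (Tuple.monotone_sort u).strictMono_of_injective (hu.comp (Equiv.injective _))
    · exact Or.inl hu
  calc (1 : ℝ≥0∞) = unifPi n Set.univ := huniv.symm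
    _ ≤ unifPi n ({u : Fin n → ℝ | ¬ Function.Injective u}
          ∪ ⋃ σ : Equiv.Perm (Fin n), {u : Fin n → ℝ | u ∘ σ ∈ MM}) := measure_mono hcover
    _ ≤ unifPi n {u : Fin n → ℝ | ¬ Function.Injective u}
          + unifPi n (⋃ σ : Equiv.Perm (Fin n), {u : Fin n → ℝ | u ∘ σ ∈ MM}) := measure_union_le _ _
    _ ≤ 0 + ∑' σ : Equiv.Perm (Fin n), unifPi n {u : Fin n → ℝ | u ∘ σ ∈ MM} := by
        gcongr
        · exact hN.le
        · exact measure_iUnion_le _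
    _ = ∑ σ : Equiv.Perm (Fin n), unifPi n {u : Fin n → ℝ | u ∘ σ ∈ MM} := by
        rw [zero_add, tsum_fintype]
    _ = ∑ σ : Equiv.Perm (Fin n), unifPi n MM := by
        refine Finset.sum_congr rfl fun σ _ => unifPi_comp_perm n σ (strictMono_measurableSet n)
    _ = (Fintype.card (Equiv.Perm (Fin n)) : ℝ≥0∞) * unifPi n MM := by
        rw [Finset.sum_const, nsmul_eq_mul]; rfl

/-- For `n ≥ 1`, `0 ≤ t ≤ n` and `s = t/(n(n+1))`, the probability that all
`n+1` consecutive spacings of the order statistics of `n` i.i.d. `Uniform(0,1)` variables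
(including the boundary spacings to `0` and `1`) exceed `s` — the event
`{u : |u i − u j| > s ∀ i ≠ j, and s < u i < 1 − s ∀ i}` — is at least `(1 − t/n)^n`. -/
theorem stmt11 (n : ℕ) (hn : 1 ≤ n) (t : ℝ) (ht0 : 0 ≤ t) (htn : t ≤ n) :
    ENNReal.ofReal ((1 - t / n) ^ n) ≤
      unifPi n
        {u : Fin n → ℝ |
          (∀ i j, i ≠ j → t / (n * (n + 1)) < |u i - u j|) ∧
          ∀ i, t / (n * (n + 1)) < u i ∧ u i < 1 - t / (n * (n + 1))} := by
  have hn0 : (0:ℝ) < n := by exact_mod_cast Nat.pos_of_ne_zero (by omega)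
  set s : ℝ := t / (n * (n + 1)) with hsdef
  set c : ℝ := 1 - t / n with hcdef
  have hs0 : 0 ≤ s := by
    apply div_nonneg ht0; positivity
  have hc0 : 0 ≤ c := by
    have : t / n ≤ 1 := (div_le_one hn0).2 htn
    rw [hcdef]; linarith
  have hcs : c = 1 - ((n:ℝ) + 1) * s := by
    rw [hcdef, hsdef]
    have h1 : (n:ℝ) ≠ 0 := ne_of_gt hn0
    have h2 : (n:ℝ) + 1 ≠ 0 := by positivity
    field_simp
  rcases eq_or_lt_of_le hc0 with h0 | hcpos
  · rw [← h0, zero_pow (by omega : n ≠ 0)]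
    simp
  have hcne : c ≠ 0 := ne_of_gt hcpos
  set cube : Set (Fin n → ℝ) := Set.univ.pi fun _ : Fin n => Set.Ioo (0:ℝ) 1 with hcube
  set MM : Set (Fin n → ℝ) := {v : Fin n → ℝ | StrictMono v} with hMMdef
  set M : Set (Fin n → ℝ) := MM ∩ cube with hMdef
  set F : (Fin n → ℝ) → (Fin n → ℝ) := fun v i => c * v i + (((i:ℕ):ℝ) + 1) * s with hFdef
  set S : Set (Fin n → ℝ) := F '' M with hSdef
  set E : Set (Fin n → ℝ) := {u : Fin n → ℝ |
      (∀ i j, i ≠ j → s < |u i - u j|) ∧ ∀ i, s < u i ∧ u i < 1 - s} with hEdef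
  -- membership facts for M
  have hMmem : ∀ v ∈ M, StrictMono v ∧ ∀ i, 0 < v i ∧ v i < 1 := by
    intro v hv
    refine ⟨hv.1, fun i => ?_⟩
    simpa using Set.mem_univ_pi.1 hv.2 i
  -- gap estimate
  have hgap : ∀ v ∈ M, ∀ i j : Fin n, i < j → s < F v j - F v i := by
    intro v hv i j hij
    obtain ⟨hmono, hio⟩ := hMmem v hv
    have h1 : v i < v j := hmono hij
    have h2 : ((i:ℕ):ℝ) + 1 ≤ ((j:ℕ):ℝ) := by exact_mod_cast Nat.succ_le_of_lt hij
    have h3 : c * v i < c * v j := mul_lt_mul_of_pos_left h1 hcpos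
    have h4 : 1 * s ≤ (((j:ℕ):ℝ) - ((i:ℕ):ℝ)) * s :=
      mul_le_mul_of_nonneg_right (by linarith) hs0
    simp only [hFdef]
    nlinarith [h3, h4]
  have hbound : ∀ v ∈ M, ∀ i : Fin n, s < F v i ∧ F v i < 1 - s := by
    intro v hv i
    obtain ⟨hmono, hio⟩ := hMmem v hv
    obtain ⟨h01, h02⟩ := hio i
    have hcv : 0 < c * v i := mul_pos hcpos h01
    have hi1 : (1:ℝ) ≤ ((i:ℕ):ℝ) + 1 := by
      have : (0:ℝ) ≤ ((i:ℕ):ℝ) := Nat.cast_nonneg _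
      linarith
    have hin : ((i:ℕ):ℝ) + 1 ≤ (n:ℝ) := by exact_mod_cast i.isLt
    constructor
    · have : 1 * s ≤ (((i:ℕ):ℝ) + 1) * s := mul_le_mul_of_nonneg_right hi1 hs0
      simp only [hFdef]; nlinarith
    · have h5 : c * v i < c * 1 := by nlinarith
      have h6 : (((i:ℕ):ℝ) + 1) * s ≤ (n:ℝ) * s := mul_le_mul_of_nonneg_right hin hs0
      simp only [hFdef]; nlinarith [hcs]
  have hSE : S ⊆ E := by
    rintro _ ⟨v, hv, rfl⟩
    constructor
    · intro i j hij
      rcases lt_or_gt_of_ne hij with h | h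
      · have := hgap v hv i j h
        have habs : F v j - F v i ≤ |F v i - F v j| := by
          rw [abs_sub_comm]; exact le_abs_self _
        linarith
      · have := hgap v hv j i h
        have habs : F v i - F v j ≤ |F v i - F v j| := le_abs_self _
        linarith
    · intro i; exact hbound v hv i
  have hScube : S ⊆ cube := by
    rintro _ ⟨v, hv, rfl⟩
    rw [hcube, Set.mem_univ_pi]
    intro i
    obtain ⟨hb1, hb2⟩ := hbound v hv i
    exact ⟨by linarith, by linarith⟩
  have hSMM : S ⊆ MM := by
    rintro _ ⟨v, hv, rfl⟩
    intro i j hij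
    have := hgap v hv i j hij
    linarith
  -- measurability of S
  set G : (Fin n → ℝ) → (Fin n → ℝ) := fun u i => (u i - (((i:ℕ):ℝ) + 1) * s) / c with hGdef
  have hGF : ∀ v, G (F v) = v := by
    intro v; funext i
    simp only [hGdef, hFdef]
    rw [add_sub_cancel_right, mul_div_cancel_left₀ _ hcne]
  have hFG : ∀ u, F (G u) = u := by
    intro u; funext i
    simp only [hGdef, hFdef]
    field_simp
    ring
  have hSeqG : S = G ⁻¹' M := by
    ext u
    constructor
    · rintro ⟨v, hv, rfl⟩
      simpa [Set.mem_preimage, hGF v] using hv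
    · intro h
      exact ⟨G u, h, hFG u⟩
  have hGmeas : Measurable G :=
    measurable_pi_lambda _ fun i =>
      (by show Measurable fun u : Fin n → ℝ => (u i - (((i:ℕ):ℝ) + 1) * s) / c; fun_prop)
  have hcubemeas : MeasurableSet cube := MeasurableSet.univ_pi fun _ => measurableSet_Ioo
  have hMmeas : MeasurableSet M := (strictMono_measurableSet n).inter hcubemeas
  have hSmeas : MeasurableSet S := by rw [hSeqG]; exact hGmeas hMmeas
  -- volume of S
  set b : Fin n → ℝ := fun i => (((i:ℕ):ℝ) + 1) * s with hbdef
  have him : S = (fun w => b + w) '' (c • M) := by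
    rw [hSdef, ← Set.image_smul, Set.image_image]
    have hfeq : ∀ v : Fin n → ℝ, b + c • v = F v := by
      intro v; funext i
      simp only [Pi.add_apply, Pi.smul_apply, smul_eq_mul, hbdef, hFdef]
      ring
    exact (Set.image_congr fun v _ => hfeq v).symm
  have hpre : (fun w => b + w) '' (c • M) = (fun w => -b + w) ⁻¹' (c • M) := by
    ext w
    constructor
    · rintro ⟨x, hx, rfl⟩
      simpa [Set.mem_preimage, neg_add_cancel_left] using hx
    · intro hw
      exact ⟨-b + w, hw, by simp [add_neg_cancel_left]⟩
  have hvolS : volume S = ENNReal.ofReal (c ^ n) * volume M := by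
    rw [him, hpre, measure_preimage_add, Measure.addHaar_smul, Module.finrank_fin_fun,
      abs_of_pos (pow_pos hcpos n)]
  -- unifPi of S and MM
  have hunifMM : unifPi n MM = volume M := by
    rw [unifPi_eq, Measure.restrict_apply (strictMono_measurableSet n)]
  have hunifS : unifPi n S = ENNReal.ofReal (c ^ n) * unifPi n MM := by
    have h1 : unifPi n S = volume S := by
      rw [unifPi_eq, Measure.restrict_apply hSmeas, Set.inter_eq_self_of_subset_left hScube]
    rw [h1, hvolS, hunifMM]
  -- permuted copies
  set A : Equiv.Perm (Fin n) → Set (Fin n → ℝ) := fun σ => {u | u ∘ σ ∈ S} with hAdef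
  have hAmeas : ∀ σ, MeasurableSet (A σ) := by
    intro σ
    have : Measurable (fun u : Fin n → ℝ => u ∘ σ) :=
      measurable_pi_lambda _ fun i => measurable_pi_apply (σ i)
    exact this hSmeas
  have hdisj : Pairwise (Function.onFun Disjoint A) := by
    intro σ τ hne
    rw [Function.onFun, Set.disjoint_left]
    intro u huσ huτ
    have h1 : StrictMono (u ∘ σ) := hSMM huσ
    have h2 : StrictMono (u ∘ τ) := hSMM huτ
    have hr : Set.range (u ∘ σ) = Set.range (u ∘ τ) := by
      rw [Function.Surjective.range_comp σ.surjective, Function.Surjective.range_comp τ.surjective]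
    haveI : WellFoundedLT (Fin n) := Finite.to_wellFoundedLT
    have heq : u ∘ ⇑σ = u ∘ ⇑τ := (h1.range_inj h2).1 hr
    have hu : Function.Injective u := by
      intro a b hab
      have h3 : (u ∘ ⇑σ) (σ.symm a) = (u ∘ ⇑σ) (σ.symm b) := by
        simpa [Function.comp] using hab
      have h4 := h1.injective h3
      simpa using congrArg σ h4
    apply hne
    refine Equiv.ext fun i => ?_
    exact hu (congrFun heq i)
  have hAE : ∀ σ, A σ ⊆ E := by
    intro σ u hu
    obtain ⟨hA1, hA2⟩ := hSE hu
    constructor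
    · intro i j hij
      have hne' : σ.symm i ≠ σ.symm j := by
        intro h; exact hij (by simpa using congrArg σ h)
      have := hA1 (σ.symm i) (σ.symm j) hne'
      simpa [Function.comp] using this
    · intro i
      have := hA2 (σ.symm i)
      simpa [Function.comp] using this
  have husum : unifPi n (⋃ σ, A σ) = ∑' σ, unifPi n (A σ) := measure_iUnion hdisj hAmeas
  have hperm : ∀ σ, unifPi n (A σ) = unifPi n S := fun σ => unifPi_comp_perm n σ hSmeas
  have hsum : ∑' σ, unifPi n (A σ)
      = (Fintype.card (Equiv.Perm (Fin n)) : ℝ≥0∞) * unifPi n S := by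
    rw [tsum_fintype]
    simp only [hperm]
    rw [Finset.sum_const, nsmul_eq_mul]
    rfl
  have hUsub : (⋃ σ, A σ) ⊆ E := Set.iUnion_subset hAE
  have hfinal := one_le_card_mul n
  calc ENNReal.ofReal (c ^ n)
      = ENNReal.ofReal (c ^ n) * 1 := (mul_one _).symm
    _ ≤ ENNReal.ofReal (c ^ n)
        * ((Fintype.card (Equiv.Perm (Fin n)) : ℝ≥0∞) * unifPi n MM) :=
        mul_le_mul_right hfinal _
    _ = (Fintype.card (Equiv.Perm (Fin n)) : ℝ≥0∞)
        * (ENNReal.ofReal (c ^ n) * unifPi n MM) := by ring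
    _ = (Fintype.card (Equiv.Perm (Fin n)) : ℝ≥0∞) * unifPi n S := by rw [hunifS]
    _ = ∑' σ, unifPi n (A σ) := hsum.symm
    _ = unifPi n (⋃ σ, A σ) := husum.symm
    _ ≤ unifPi n E := measure_mono hUsub
end
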